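/- arXiv:math/9903181 — 2 statements merged into one kernel-verified Lean document; each statement's English description precedes it below -/
import Mathlib

section
/- For all nonzero raiz θ₁, θ₂ and all i, j ∈ ℤ/nℤ the following operator identities hold on N: [Ẽ(θ₁), Ẽ(θ₂)] = Ẽ(θ₁⌣θ₂) − Ẽ(θ₂⌣θ₁); [E(θ₁), E(θ₂)] = E(θ₂⌣θ₁) − E(θ₁⌣θ₂); [B(θ₁), B(θ₂)] = B(θ₁⌣θ₂) − B(θ₂⌣θ₁); [𝔅_i, 𝔅_j] = 0; and for any nonzero raiz θ, [B(θ), 𝔅_i] equals B(θ) if θ ends at i but does not begin at i+1, equals −B(θ) if θ begins at i+1 but does not end at i, and equals 0 otherwise. -/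
/-!
Common setup: raiz for the cyclic quiver `Ã_{n-1}`, the polynomial algebra
`N = ℚ[x_θ : θ ∈ R⁺(n)]`, and the locally finite differential operators
`E(θ)`, `Ẽ(θ)`, `B(θ)`, `𝔅_i`, `𝔈_i`, `Δ_i`, and the Chevalley operators
`e_i^T`, `h_i^T`, `f_i^T`, following Finkelberg–Kuznetsov.
-/

open MvPolynomial

/-- A raiz for the cyclic quiver with `n` vertices: a pair `(p,q)` of integers with
`p ≤ q`, modulo simultaneous translation of both entries by `n`; it is faithfully
encoded by the ending class `q mod n : ZMod n` together with the (positive) length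
`q - p + 1 : ℕ+`. -/
abbrev Raiz (n : ℕ) : Type := ZMod n × ℕ+

namespace Raiz

variable {n : ℕ}

/-- The class at which a raiz begins: for `(p,q)` this is `p mod n = (q - len + 1) mod n`. -/
def beg (θ : Raiz n) : ZMod n := θ.1 - ((θ.2 : ℕ) : ZMod n) + 1

/-- `θ = (p,q)` ends at `i` iff `q ≡ i (mod n)`. -/
def Ends (θ : Raiz n) (i : ZMod n) : Prop := θ.1 = i

/-- `θ = (p,q)` begins at `i` iff `p ≡ i (mod n)`. -/
def Begins (θ : Raiz n) (i : ZMod n) : Prop := beg θ = i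

/-- The simple raiz `(i,i)`. -/
def simple (i : ZMod n) : Raiz n := (i, 1)

/-- The concatenation `ϑ⌣θ`: it is defined (`some`) exactly when `θ` begins at the
class following the class at which `ϑ` ends; for `ϑ = (a,b)` ending at `i-1` and
`θ = (p,q)` beginning at `i` it is `(a, b+q-p+1)`, i.e. it ends where `θ` ends and
its length is the sum of the lengths. -/
def cat (ϑ θ : Raiz n) : Option (Raiz n) :=
  if beg θ = ϑ.1 + 1 then some (θ.1, ϑ.2 + θ.2) else none

/-- `dimAt θ j` is the number of integers in `[p,q]` congruent to `j` mod `n`: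
the dimension vector `dim θ ∈ ℕ^{ℤ/nℤ}` of the raiz `θ`. -/
def dimAt (θ : Raiz n) (j : ZMod n) : ℕ :=
  ((Finset.range (θ.2 : ℕ)).filter (fun t => θ.1 - ((t : ℕ) : ZMod n) = j)).card

end Raiz

/-- The polynomial algebra `N = ℚ[x_θ : θ ∈ R⁺(n)]`. -/
abbrev Pol (n : ℕ) := MvPolynomial (Raiz n) ℚ

/-- Operators on `N`. -/
abbrev Op (n : ℕ) := Pol n → Pol n

noncomputable section

/-- The locally finite differential operator `Σ_η c(η)·∂/∂x_η`: applied to a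
polynomial `P` only the (finitely many) variables occurring in `P` contribute,
since `∂P/∂x_η = 0` for `η ∉ vars P`. -/
def diffOp {n : ℕ} (c : Raiz n → Pol n) : Op n :=
  fun P => ∑ η ∈ P.vars, c η * pderiv η P

/-- `Ẽ(θ) = Σ_{ϑ ∈ E_{i-1}} x_ϑ ∂/∂x_{ϑ⌣θ}` for a raiz `θ` beginning at `i`: the
term `ϑ = 0` contributes `∂/∂x_θ` (as `x_0 = 1` and `0⌣θ = θ`), and a nonzero `ϑ`
ending at `i-1` contributes at the variable `η = ϑ⌣θ`, i.e. at `η` with the same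
end as `θ` and `len η > len θ`, with coefficient `x_ϑ`, where
`ϑ = (beg θ - 1, len η - len θ)`. -/
def Etil {n : ℕ} (θ : Raiz n) : Op n :=
  diffOp (fun η =>
    if η = θ then 1
    else if η.1 = θ.1 ∧ θ.2 < η.2 then X ((Raiz.beg θ - 1, η.2 - θ.2) : Raiz n) else 0)

/-- `E(θ) = Σ_{ϑ ∈ E_{i-1}} x_{ϑ⌣θ} ∂/∂x_ϑ` for a raiz `θ` beginning at `i`
(the `ϑ = 0` term vanishes since `∂/∂x_0 = 0`). -/
def Eop {n : ℕ} (θ : Raiz n) : Op n :=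
  diffOp (fun ϑ => if ϑ.1 = Raiz.beg θ - 1 then X ((θ.1, ϑ.2 + θ.2) : Raiz n) else 0)

/-- `B(θ) = Σ_{ϑ ∈ B_{i+1}} x_{θ⌣ϑ} ∂/∂x_ϑ` for a raiz `θ` ending at `i`
(the `ϑ = 0` term vanishes since `∂/∂x_0 = 0`). -/
def Bop {n : ℕ} (θ : Raiz n) : Op n :=
  diffOp (fun ϑ => if Raiz.beg ϑ = θ.1 + 1 then X ((ϑ.1, θ.2 + ϑ.2) : Raiz n) else 0)

/-- `𝔅_i = Σ_{0 ≠ θ ∈ B_{i+1}} x_θ ∂/∂x_θ`. -/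
def Bfrak {n : ℕ} (i : ZMod n) : Op n :=
  diffOp (fun θ => if Raiz.beg θ = i + 1 then X θ else 0)

/-- `𝔈_i = Σ_{0 ≠ θ ∈ E_{i-1}} x_θ ∂/∂x_θ`. -/
def Efrak {n : ℕ} (i : ZMod n) : Op n :=
  diffOp (fun θ => if θ.1 = i - 1 then X θ else 0)

/-- The commutator `[f,g] = f∘g - g∘f` of two operators. -/
def brak {n : ℕ} (f g : Op n) : Op n := fun P => f (g P) - g (f P)

/-- Multiplication by `x_θ` as an operator on `N`. -/
def mulX {n : ℕ} (θ : Raiz n) : Op n := fun P => X θ * P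

/-- Extend a raiz-indexed family of operators to `Option (Raiz n)`: a term with
an undefined concatenation is declared to be `0`. -/
def opt {n : ℕ} (F : Raiz n → Op n) : Option (Raiz n) → Op n
  | none => 0
  | some θ => F θ

/-- `Δ_i = 𝔅_{i-1} - 𝔅_i + c_i`, for a fixed family of constants `c`. -/
def Delta {n : ℕ} (c : ZMod n → ℚ) (i : ZMod n) : Op n :=
  fun P => Bfrak (i - 1) P - Bfrak i P + c i • P

/-- The Chevalley operator `e_i^T = Ẽ(i)`. -/
def eT {n : ℕ} (i : ZMod n) : Op n := Etil (Raiz.simple i)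

/-- The Chevalley operator `h_i^T = 𝔈_{i+1} - 𝔈_i + Δ_i`. -/
def hT {n : ℕ} (c : ZMod n → ℚ) (i : ZMod n) : Op n :=
  fun P => Efrak (i + 1) P - Efrak i P + Delta c i P

/-- The Chevalley operator `f_i^T = B(i) - E(i) + x_i·Δ_i`. -/
def fT {n : ℕ} (c : ZMod n → ℚ) (i : ZMod n) : Op n :=
  fun P => Bop (Raiz.simple i) P - Eop (Raiz.simple i) P + X (Raiz.simple i) * Delta c i P

/-- The affine Cartan matrix of type `Ã_{n-1}` (for `n ≥ 2`): `a_ii = 2`;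
`a_ij = -1` if `j = i±1` and `n ≠ 2`; `a_ij = -2` if `n = 2` and `j = i+1 ≠ i`;
`a_ij = 0` otherwise. -/
def cartan (n : ℕ) (i j : ZMod n) : ℤ :=
  if j = i then 2
  else if n = 2 then -2
  else if j = i + 1 ∨ j = i - 1 then -1
  else 0

/-- The projection `ζ : R⁺(m) → R⁺(n)` for `n ∣ m`: the class of `(p,q)` modulo `m`
is sent to its class modulo `n`. -/
def Raiz.zetaR {n m : ℕ} (h : n ∣ m) : Raiz m → Raiz n :=
  fun θ => (ZMod.castHom h (ZMod n) θ.1, θ.2)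

/-- The induced `ℚ`-algebra homomorphism `ζ : ℚ[x_ϑ : ϑ ∈ R⁺(m)] → ℚ[x_θ : θ ∈ R⁺(n)]`,
`x_ϑ ↦ x_{ζ(ϑ)}`. -/
def zeta {n m : ℕ} (h : n ∣ m) : Pol m →ₐ[ℚ] Pol n :=
  MvPolynomial.rename (Raiz.zetaR h)

/-- The natural-number representatives in `[0, m)` of the residues `≡ i (mod n)`:
for `n ∣ m` these enumerate (via `ℕ → ZMod m`) exactly the classes `j ∈ ℤ/mℤ` with
`j ≡ i (mod n)`. -/
def fiber (n m : ℕ) (i : ZMod n) : Finset ℕ :=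
  (Finset.range m).filter (fun t => ((t : ZMod n) = i))

/-- All raiz of level `n` with length at most `m`. -/
def raizUpTo (n m : ℕ) : Finset (Raiz n) :=
  ((Finset.range n).image (fun a : ℕ => ((a : ZMod n)))) ×ˢ
    ((Finset.range m).image (fun l : ℕ => (⟨l + 1, Nat.succ_pos l⟩ : ℕ+)))

open Classical in
/-- Kostant partitions of the dimension vector `γ`, as multisets `κ` of raiz with
`Σ_{θ ∈ κ} dim θ = γ`; the parameter `m` bounds the lengths of parts and the
multiplicities, so for `Σ_j γ(j) ≤ m` this is the set of all Kostant partitions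
of `γ`. -/
def kostant (n : ℕ) (γ : ZMod n → ℕ) (m : ℕ) : Finset (Multiset (Raiz n)) :=
  ((m • (raizUpTo n m).val).powerset.toFinset).filter
    (fun κ => ∀ j, (κ.map (fun θ => θ.dimAt j)).sum = γ j)

/-- The monomial `x^κ` attached to a Kostant partition `κ`. -/
def xPow {n : ℕ} (κ : Multiset (Raiz n)) : Pol n :=
  (κ.map (fun θ => (X θ : Pol n))).prod

/-- `P_n = Σ_{κ ∈ 𝔎(α_n)} (-1)^{K(κ)+1} x^κ`: the sum is over all Kostant partitions
of the all-ones dimension vector `α_n` (all of whose parts have length `≤ n` and which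
have at most `n` parts). -/
def Ppoly (n : ℕ) : Pol n :=
  ∑ κ ∈ kostant n (fun _ => 1) n, ((-1 : ℚ) ^ (Multiset.card κ + 1)) • xPow κ

open Classical in
/-- `a_p = Σ_{θ : dim θ = p·α_n} Ẽ(θ)` for `p ≥ 1` (a finite sum: such `θ` have
length `p·n`). -/
def aPos (n p : ℕ) : Op n :=
  fun P => ∑ θ ∈ (raizUpTo n (p * n)).filter (fun θ => ∀ j, θ.dimAt j = p), Etil θ P

/-- `a_{-p}`: `c₀` times the operator of multiplication by `ζ(P_{pn})`, for `p ≥ 1`. -/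
def aNeg (n : ℕ) (c₀ : ℚ) (p : ℕ) : Op n :=
  fun P => c₀ • (zeta (dvd_mul_left n p) (Ppoly (p * n)) * P)

end


/-! ### Auxiliary development for `comm_lemma_one` -/

noncomputable section CommAux

open MvPolynomial

variable {n : ℕ}

theorem diffOp_eq_sum (c : Raiz n → Pol n) (P : Pol n) {S : Finset (Raiz n)}
    (h : P.vars ⊆ S) : diffOp c P = ∑ η ∈ S, c η * pderiv η P :=
  Finset.sum_subset h fun _ _ hx => by
    rw [pderiv_eq_zero_of_notMem_vars hx, mul_zero]

theorem diffOp_eq_mk (c : Raiz n → Pol n) (P : Pol n) :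
    diffOp c P = MvPolynomial.mkDerivation ℚ c P := by
  induction P using MvPolynomial.induction_on with
  | C a =>
    simp [diffOp, vars_C, MvPolynomial.derivation_C]
  | add p q hp hq =>
    classical
    rw [diffOp_eq_sum c (p + q) (S := p.vars ∪ q.vars ∪ (p + q).vars)
      (fun x hx => Finset.mem_union_right _ hx)]
    simp only [map_add, mul_add, Finset.sum_add_distrib]
    rw [← diffOp_eq_sum c p
        (fun x hx => Finset.mem_union_left _ (Finset.mem_union_left _ hx)),
      ← diffOp_eq_sum c q
        (fun x hx => Finset.mem_union_left _ (Finset.mem_union_right _ hx)),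
      hp, hq]
  | mul_X p i hp =>
    classical
    rw [diffOp_eq_sum c (p * X i) (S := insert i (p.vars ∪ (p * X i).vars))
      (fun x hx => Finset.mem_insert_of_mem (Finset.mem_union_right _ hx))]
    have key : ∀ η ∈ insert i (p.vars ∪ (p * X i).vars),
        c η * pderiv η (p * X i)
          = c η * pderiv η p * X i + (if η = i then c i * p else 0) := by
      intro η _
      rw [pderiv_mul]
      by_cases hηi : η = i
      · subst hηi; rw [if_pos rfl, pderiv_X_self]; ring
      · rw [if_neg hηi, pderiv_X_of_ne (Ne.symm hηi)]; ring
    rw [Finset.sum_congr rfl key, Finset.sum_add_distrib,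
      Finset.sum_ite_eq' _ i (fun _ => c i * p), if_pos (Finset.mem_insert_self _ _),
      ← Finset.sum_mul,
      ← diffOp_eq_sum c p
        (fun x hx => Finset.mem_insert_of_mem (Finset.mem_union_left _ hx)),
      hp, Derivation.leibniz, MvPolynomial.mkDerivation_X]
    simp only [smul_eq_mul]
    ring

theorem diffOp_X (c : Raiz n → Pol n) (ϑ : Raiz n) : diffOp c (X ϑ) = c ϑ := by
  rw [diffOp_eq_mk, MvPolynomial.mkDerivation_X]

theorem diffOp_one (c : Raiz n → Pol n) : diffOp c (1 : Pol n) = 0 := by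
  rw [diffOp_eq_mk]; exact (MvPolynomial.mkDerivation ℚ c).map_one_eq_zero

theorem diffOp_zeroP (c : Raiz n → Pol n) : diffOp c (0 : Pol n) = 0 := by
  rw [diffOp_eq_mk]; exact map_zero _

theorem brak_diffOp (c d : Raiz n → Pol n) :
    brak (diffOp c) (diffOp d) =
      diffOp (fun ζ => diffOp c (d ζ) - diffOp d (c ζ)) := by
  have hcomm : (⁅MvPolynomial.mkDerivation ℚ c, MvPolynomial.mkDerivation ℚ d⁆ :
      Derivation ℚ (Pol n) (Pol n)) =
      MvPolynomial.mkDerivation ℚ (fun ζ => diffOp c (d ζ) - diffOp d (c ζ)) := by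
    apply MvPolynomial.derivation_ext
    intro ζ
    simp only [Derivation.commutator_apply, MvPolynomial.mkDerivation_X]
    rw [← diffOp_eq_mk, ← diffOp_eq_mk]
  funext P
  show diffOp c (diffOp d P) - diffOp d (diffOp c P) = _
  rw [diffOp_eq_mk d P, diffOp_eq_mk c (MvPolynomial.mkDerivation ℚ d P),
    diffOp_eq_mk c P, diffOp_eq_mk d (MvPolynomial.mkDerivation ℚ c P),
    diffOp_eq_mk (fun ζ => diffOp c (d ζ) - diffOp d (c ζ)) P,
    ← Derivation.commutator_apply, hcomm]

theorem diffOp_sub (a b : Raiz n → Pol n) :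
    diffOp (fun η => a η - b η) = diffOp a - diffOp b := by
  funext P
  simp [diffOp, sub_mul, Finset.sum_sub_distrib]

theorem diffOp_neg (a : Raiz n → Pol n) :
    diffOp (fun η => -(a η)) = -diffOp a := by
  funext P
  simp [diffOp, neg_mul]

theorem diffOp_zeroC : diffOp (fun _ : Raiz n => (0 : Pol n)) = (0 : Op n) := by
  funext P
  simp [diffOp]

/-- The coefficient function of `Etil`. -/
def etilC (θ : Raiz n) : Raiz n → Pol n := fun η =>
  if η = θ then 1
  else if η.1 = θ.1 ∧ θ.2 < η.2 then X ((Raiz.beg θ - 1, η.2 - θ.2) : Raiz n) else 0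

/-- The coefficient function of `Eop`. -/
def eopC (θ : Raiz n) : Raiz n → Pol n := fun ϑ =>
  if ϑ.1 = Raiz.beg θ - 1 then X ((θ.1, ϑ.2 + θ.2) : Raiz n) else 0

/-- The coefficient function of `Bop`. -/
def bopC (θ : Raiz n) : Raiz n → Pol n := fun ϑ =>
  if Raiz.beg ϑ = θ.1 + 1 then X ((ϑ.1, θ.2 + ϑ.2) : Raiz n) else 0

/-- The coefficient function of `Bfrak`. -/
def bfC (i : ZMod n) : Raiz n → Pol n := fun θ =>
  if Raiz.beg θ = i + 1 then X θ else 0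

theorem Etil_eq (θ : Raiz n) : Etil θ = diffOp (etilC θ) := rfl
theorem Eop_eq (θ : Raiz n) : Eop θ = diffOp (eopC θ) := rfl
theorem Bop_eq (θ : Raiz n) : Bop θ = diffOp (bopC θ) := rfl
theorem Bfrak_eq (i : ZMod n) : Bfrak i = diffOp (bfC i) := rfl

/-- Coefficient version of `opt`. -/
def optC (F : Raiz n → Raiz n → Pol n) : Option (Raiz n) → Raiz n → Pol n
  | none => fun _ => 0
  | some τ => F τ

theorem opt_diff (F : Raiz n → Raiz n → Pol n) (G : Raiz n → Op n)
    (hFG : ∀ τ, G τ = diffOp (F τ)) (o : Option (Raiz n)) :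
    opt G o = diffOp (optC F o) := by
  cases o with
  | none => exact diffOp_zeroC.symm
  | some τ => exact hFG τ

theorem etilC_of_eq {θ ζ : Raiz n} (h : ζ = θ) : etilC θ ζ = 1 := by
  simp only [etilC]; rw [if_pos h]

theorem etilC_of_mid {θ ζ : Raiz n} (h0 : ζ ≠ θ) (h : ζ.1 = θ.1 ∧ θ.2 < ζ.2) :
    etilC θ ζ = X ((Raiz.beg θ - 1, ζ.2 - θ.2) : Raiz n) := by
  simp only [etilC]; rw [if_neg h0, if_pos h]

theorem etilC_of_none {θ ζ : Raiz n} (h0 : ζ ≠ θ) (h : ¬(ζ.1 = θ.1 ∧ θ.2 < ζ.2)) :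
    etilC θ ζ = 0 := by
  simp only [etilC]; rw [if_neg h0, if_neg h]

theorem eopC_pos {θ ϑ : Raiz n} (h : ϑ.1 = Raiz.beg θ - 1) :
    eopC θ ϑ = X ((θ.1, ϑ.2 + θ.2) : Raiz n) := by
  simp only [eopC]; rw [if_pos h]

theorem eopC_neg {θ ϑ : Raiz n} (h : ¬ ϑ.1 = Raiz.beg θ - 1) : eopC θ ϑ = 0 := by
  simp only [eopC]; rw [if_neg h]

theorem bopC_pos {θ ϑ : Raiz n} (h : Raiz.beg ϑ = θ.1 + 1) :
    bopC θ ϑ = X ((ϑ.1, θ.2 + ϑ.2) : Raiz n) := by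
  simp only [bopC]; rw [if_pos h]

theorem bopC_neg {θ ϑ : Raiz n} (h : ¬ Raiz.beg ϑ = θ.1 + 1) : bopC θ ϑ = 0 := by
  simp only [bopC]; rw [if_neg h]

theorem bfC_pos {i : ZMod n} {ζ : Raiz n} (h : Raiz.beg ζ = i + 1) : bfC i ζ = X ζ := by
  simp only [bfC]; rw [if_pos h]

theorem bfC_neg {i : ZMod n} {ζ : Raiz n} (h : ¬ Raiz.beg ζ = i + 1) : bfC i ζ = 0 := by
  simp only [bfC]; rw [if_neg h]

theorem psub_coe {a b : ℕ+} (h : b < a) :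
    ((a - b : ℕ+) : ℕ) = (a : ℕ) - (b : ℕ) := by
  rw [PNat.sub_coe, if_pos h]

theorem cat_eq (ϑ θ : Raiz n) :
    Raiz.cat ϑ θ =
      if Raiz.beg θ = ϑ.1 + 1 then some ((θ.1, ϑ.2 + θ.2) : Raiz n) else none := rfl

theorem etil_key (θ₁ θ₂ ζ : Raiz n) :
    diffOp (etilC θ₁) (etilC θ₂ ζ) = optC etilC (Raiz.cat θ₁ θ₂) ζ := by
  rw [cat_eq]
  by_cases hb : Raiz.beg θ₂ = θ₁.1 + 1
  · rw [if_pos hb]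
    simp only [optC]
    set τ : Raiz n := (θ₂.1, θ₁.2 + θ₂.2) with hτ
    have hfst : Raiz.beg θ₂ - 1 = θ₁.1 := by linear_combination hb
    have hb' : θ₂.1 - ((θ₂.2 : ℕ) : ZMod n) + 1 = θ₁.1 + 1 := hb
    have hτ2 : ((τ.2 : ℕ+) : ℕ) = (θ₁.2 : ℕ) + (θ₂.2 : ℕ) := by
      rw [hτ]; exact PNat.add_coe _ _
    by_cases h1 : ζ = θ₂
    · rw [etilC_of_eq h1, diffOp_one]
      refine (etilC_of_none ?_ ?_).symm
      · intro he
        have h2 : ζ.2 = τ.2 := congrArg Prod.snd he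
        rw [h1] at h2
        exact absurd h2 (PNat.lt_add_left θ₂.2 θ₁.2).ne
      · rintro ⟨-, hlt⟩
        rw [h1] at hlt
        exact absurd hlt (PNat.lt_add_left θ₂.2 θ₁.2).asymm
    · by_cases h2 : ζ.1 = θ₂.1 ∧ θ₂.2 < ζ.2
      · rw [etilC_of_mid h1 h2, diffOp_X]
        have hsub := psub_coe h2.2
        have h22 : (θ₂.2 : ℕ) < (ζ.2 : ℕ) := (PNat.coe_lt_coe _ _).mpr h2.2
        by_cases h3 : ((Raiz.beg θ₂ - 1, ζ.2 - θ₂.2) : Raiz n) = θ₁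
        · rw [etilC_of_eq h3]
          have hlen : ((ζ.2 - θ₂.2 : ℕ+) : ℕ) = (θ₁.2 : ℕ) :=
            congrArg (fun x : Raiz n => ((x.2 : ℕ+) : ℕ)) h3
          have hζτ : ζ = τ := by
            refine Prod.ext_iff.mpr ⟨h2.1, ?_⟩
            rw [← PNat.coe_inj, PNat.add_coe]
            rw [hsub] at hlen
            omega
          rw [etilC_of_eq hζτ]
        · by_cases h4 : (Raiz.beg θ₂ - 1 : ZMod n) = θ₁.1 ∧ θ₁.2 < ζ.2 - θ₂.2
          · rw [etilC_of_mid h3 h4]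
            have h42 : (θ₁.2 : ℕ) < ((ζ.2 - θ₂.2 : ℕ+) : ℕ) :=
              (PNat.coe_lt_coe _ _).mpr h4.2
            rw [hsub] at h42
            have hlt : τ.2 < ζ.2 := by
              rw [← PNat.coe_lt_coe, hτ2]
              omega
            have hne : ζ ≠ τ := fun he =>
              absurd hlt (by rw [he]; exact lt_irrefl _)
            rw [etilC_of_mid hne ⟨h2.1, hlt⟩]
            have hz : (Raiz.beg τ - 1 : ZMod n) = Raiz.beg θ₁ - 1 := by
              simp only [hτ, Raiz.beg]
              push_cast [PNat.add_coe]
              linear_combination hb'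
            have hp : (ζ.2 - τ.2 : ℕ+) = (ζ.2 - θ₂.2) - θ₁.2 := by
              rw [← PNat.coe_inj, psub_coe hlt, psub_coe h4.2, hsub, hτ2]
              omega
            rw [hz, hp]
          · rw [etilC_of_none h3 h4]
            refine (etilC_of_none ?_ ?_).symm
            · intro he
              apply h3
              have h2' : ((ζ.2 : ℕ+) : ℕ) = ((τ.2 : ℕ+) : ℕ) :=
                congrArg (fun x : Raiz n => ((x.2 : ℕ+) : ℕ)) he
              rw [hτ2] at h2'
              refine Prod.ext_iff.mpr ⟨hfst, ?_⟩
              show (ζ.2 - θ₂.2 : ℕ+) = θ₁.2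
              rw [← PNat.coe_inj, hsub]
              omega
            · rintro ⟨-, hlt⟩
              apply h4
              refine ⟨hfst, ?_⟩
              have hlt' : ((τ.2 : ℕ+) : ℕ) < (ζ.2 : ℕ) := (PNat.coe_lt_coe _ _).mpr hlt
              rw [hτ2] at hlt'
              rw [← PNat.coe_lt_coe, hsub]
              omega
      · rw [etilC_of_none h1 h2, diffOp_zeroP]
        refine (etilC_of_none ?_ ?_).symm
        · intro he
          apply h2
          have hf : ζ.1 = τ.1 := congrArg Prod.fst he
          have h2' : ζ.2 = τ.2 := congrArg Prod.snd he
          exact ⟨hf, by rw [h2']; exact PNat.lt_add_left θ₂.2 θ₁.2⟩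
        · rintro ⟨hf, hlt⟩
          exact h2 ⟨hf, (PNat.lt_add_left θ₂.2 θ₁.2).trans hlt⟩
  · rw [if_neg hb]
    simp only [optC]
    by_cases h1 : ζ = θ₂
    · rw [etilC_of_eq h1, diffOp_one]
    · by_cases h2 : ζ.1 = θ₂.1 ∧ θ₂.2 < ζ.2
      · rw [etilC_of_mid h1 h2, diffOp_X]
        refine etilC_of_none (fun he => hb ?_) (fun he => hb ?_)
        · have h3 : (Raiz.beg θ₂ - 1 : ZMod n) = θ₁.1 := congrArg Prod.fst he
          linear_combination h3
        · have h3 : (Raiz.beg θ₂ - 1 : ZMod n) = θ₁.1 := he.1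
          linear_combination h3
      · rw [etilC_of_none h1 h2, diffOp_zeroP]

theorem eop_key (θ₁ θ₂ ζ : Raiz n) :
    diffOp (eopC θ₁) (eopC θ₂ ζ) = optC eopC (Raiz.cat θ₂ θ₁) ζ := by
  rw [cat_eq]
  by_cases h1 : ζ.1 = Raiz.beg θ₂ - 1
  · rw [eopC_pos h1, diffOp_X]
    by_cases hb : Raiz.beg θ₁ = θ₂.1 + 1
    · rw [if_pos hb]
      simp only [optC]
      have hb' : θ₁.1 - ((θ₁.2 : ℕ) : ZMod n) + 1 = θ₂.1 + 1 := hb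
      have hz : ζ.1 = Raiz.beg ((θ₁.1, θ₂.2 + θ₁.2) : Raiz n) - 1 := by
        rw [h1]
        simp only [Raiz.beg]
        push_cast [PNat.add_coe]
        linear_combination -hb'
      rw [eopC_pos (θ := θ₁) (ϑ := ((θ₂.1, ζ.2 + θ₂.2) : Raiz n))
          (show (θ₂.1 : ZMod n) = Raiz.beg θ₁ - 1 by linear_combination -hb),
        eopC_pos hz]
      exact congrArg X (Prod.ext_iff.mpr ⟨rfl, add_assoc ζ.2 θ₂.2 θ₁.2⟩)
    · rw [if_neg hb]
      simp only [optC]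
      exact eopC_neg fun h => hb (by linear_combination -h)
  · rw [eopC_neg h1, diffOp_zeroP]
    by_cases hb : Raiz.beg θ₁ = θ₂.1 + 1
    · rw [if_pos hb]
      simp only [optC]
      refine (eopC_neg fun h => h1 ?_).symm
      rw [h]
      have hb' : θ₁.1 - ((θ₁.2 : ℕ) : ZMod n) + 1 = θ₂.1 + 1 := hb
      simp only [Raiz.beg]
      push_cast [PNat.add_coe]
      linear_combination hb'
    · rw [if_neg hb]
      simp only [optC]

theorem bop_key (θ₁ θ₂ ζ : Raiz n) :
    diffOp (bopC θ₁) (bopC θ₂ ζ) = optC bopC (Raiz.cat θ₁ θ₂) ζ := by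
  rw [cat_eq]
  by_cases h1 : Raiz.beg ζ = θ₂.1 + 1
  · rw [bopC_pos h1, diffOp_X]
    have hbegeq : Raiz.beg ((ζ.1, θ₂.2 + ζ.2) : Raiz n) = Raiz.beg θ₂ := by
      simp only [Raiz.beg] at h1 ⊢
      push_cast [PNat.add_coe]
      linear_combination h1
    by_cases hb : Raiz.beg θ₂ = θ₁.1 + 1
    · rw [if_pos hb]
      simp only [optC]
      rw [bopC_pos (show Raiz.beg ((ζ.1, θ₂.2 + ζ.2) : Raiz n) = θ₁.1 + 1 by rw [hbegeq]; exact hb),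
        bopC_pos (θ := ((θ₂.1, θ₁.2 + θ₂.2) : Raiz n)) (ϑ := ζ) h1]
      exact congrArg X (Prod.ext_iff.mpr ⟨rfl, (add_assoc θ₁.2 θ₂.2 ζ.2).symm⟩)
    · rw [if_neg hb]
      simp only [optC]
      exact bopC_neg fun h => hb (by rw [← hbegeq]; exact h)
  · rw [bopC_neg h1, diffOp_zeroP]
    by_cases hb : Raiz.beg θ₂ = θ₁.1 + 1
    · rw [if_pos hb]
      simp only [optC]
      exact (bopC_neg (θ := ((θ₂.1, θ₁.2 + θ₂.2) : Raiz n)) (ϑ := ζ) h1).symm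
    · rw [if_neg hb]
      simp only [optC]

theorem bf_key (i j : ZMod n) (ζ : Raiz n) :
    diffOp (bfC i) (bfC j ζ) =
      if Raiz.beg ζ = j + 1 ∧ Raiz.beg ζ = i + 1 then X ζ else 0 := by
  by_cases h : Raiz.beg ζ = j + 1
  · rw [bfC_pos h, diffOp_X]
    by_cases h2 : Raiz.beg ζ = i + 1
    · rw [bfC_pos h2, if_pos ⟨h, h2⟩]
    · rw [bfC_neg h2, if_neg (fun hc => h2 hc.2)]
  · rw [bfC_neg h, diffOp_zeroP, if_neg (fun hc => h hc.1)]

theorem bopbf_t1 (θ : Raiz n) (i : ZMod n) (ζ : Raiz n) :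
    diffOp (bopC θ) (bfC i ζ) =
      if Raiz.beg ζ = i + 1 ∧ Raiz.beg ζ = θ.1 + 1 then X ((ζ.1, θ.2 + ζ.2) : Raiz n)
      else 0 := by
  by_cases h : Raiz.beg ζ = i + 1
  · rw [bfC_pos h, diffOp_X]
    by_cases h2 : Raiz.beg ζ = θ.1 + 1
    · rw [bopC_pos h2, if_pos ⟨h, h2⟩]
    · rw [bopC_neg h2, if_neg (fun hc => h2 hc.2)]
  · rw [bfC_neg h, diffOp_zeroP, if_neg (fun hc => h hc.1)]

theorem bopbf_t2 (θ : Raiz n) (i : ZMod n) (ζ : Raiz n) :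
    diffOp (bfC i) (bopC θ ζ) =
      if Raiz.beg ζ = θ.1 + 1 ∧ Raiz.beg θ = i + 1 then X ((ζ.1, θ.2 + ζ.2) : Raiz n)
      else 0 := by
  by_cases h : Raiz.beg ζ = θ.1 + 1
  · rw [bopC_pos h, diffOp_X]
    have hbeg : Raiz.beg ((ζ.1, θ.2 + ζ.2) : Raiz n) = Raiz.beg θ := by
      simp only [Raiz.beg] at h ⊢
      push_cast [PNat.add_coe]
      linear_combination h
    by_cases h2 : Raiz.beg θ = i + 1
    · rw [bfC_pos (by rw [hbeg]; exact h2), if_pos ⟨h, h2⟩]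
    · rw [bfC_neg (fun hc => h2 (by rw [← hbeg]; exact hc)), if_neg (fun hc => h2 hc.2)]
  · rw [bopC_neg h, diffOp_zeroP, if_neg (fun hc => h hc.1)]

end CommAux

open Classical in
/-- For all nonzero raiz `θ₁, θ₂, θ` and all `i, j ∈ ℤ/nℤ`:
`[Ẽ(θ₁), Ẽ(θ₂)] = Ẽ(θ₁⌣θ₂) - Ẽ(θ₂⌣θ₁)`;
`[E(θ₁), E(θ₂)] = E(θ₂⌣θ₁) - E(θ₁⌣θ₂)`;
`[B(θ₁), B(θ₂)] = B(θ₁⌣θ₂) - B(θ₂⌣θ₁)`;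
`[𝔅_i, 𝔅_j] = 0`; and `[B(θ), 𝔅_i]` is `B(θ)` if `θ` ends at `i` but does not
begin at `i+1`, `-B(θ)` if `θ` begins at `i+1` but does not end at `i`, and `0`
otherwise (a term with undefined concatenation being `0`). -/
theorem comm_lemma_one {n : ℕ} (hn : 2 ≤ n) (θ₁ θ₂ θ : Raiz n) (i j : ZMod n) :
    brak (Etil θ₁) (Etil θ₂) = opt Etil (Raiz.cat θ₁ θ₂) - opt Etil (Raiz.cat θ₂ θ₁) ∧
    brak (Eop θ₁) (Eop θ₂) = opt Eop (Raiz.cat θ₂ θ₁) - opt Eop (Raiz.cat θ₁ θ₂) ∧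
    brak (Bop θ₁) (Bop θ₂) = opt Bop (Raiz.cat θ₁ θ₂) - opt Bop (Raiz.cat θ₂ θ₁) ∧
    brak (Bfrak i) (Bfrak j) = 0 ∧
    brak (Bop θ) (Bfrak i) =
      (if θ.Ends i ∧ ¬ θ.Begins (i + 1) then Bop θ
       else if θ.Begins (i + 1) ∧ ¬ θ.Ends i then -Bop θ
       else 0) := by
  have hTends : (θ.Ends i) = (θ.1 = i) := rfl
  have hTbeg : (θ.Begins (i + 1)) = (Raiz.beg θ = i + 1) := rfl
  refine ⟨?_, ?_, ?_, ?_, ?_⟩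
  · rw [Etil_eq θ₁, Etil_eq θ₂, brak_diffOp,
      show (fun ζ => diffOp (etilC θ₁) (etilC θ₂ ζ) - diffOp (etilC θ₂) (etilC θ₁ ζ))
          = fun ζ => optC etilC (Raiz.cat θ₁ θ₂) ζ - optC etilC (Raiz.cat θ₂ θ₁) ζ from
        funext fun ζ => by rw [etil_key θ₁ θ₂ ζ, etil_key θ₂ θ₁ ζ],
      diffOp_sub, ← opt_diff etilC Etil Etil_eq, ← opt_diff etilC Etil Etil_eq]
  · rw [Eop_eq θ₁, Eop_eq θ₂, brak_diffOp,
      show (fun ζ => diffOp (eopC θ₁) (eopC θ₂ ζ) - diffOp (eopC θ₂) (eopC θ₁ ζ))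
          = fun ζ => optC eopC (Raiz.cat θ₂ θ₁) ζ - optC eopC (Raiz.cat θ₁ θ₂) ζ from
        funext fun ζ => by rw [eop_key θ₁ θ₂ ζ, eop_key θ₂ θ₁ ζ],
      diffOp_sub, ← opt_diff eopC Eop Eop_eq, ← opt_diff eopC Eop Eop_eq]
  · rw [Bop_eq θ₁, Bop_eq θ₂, brak_diffOp,
      show (fun ζ => diffOp (bopC θ₁) (bopC θ₂ ζ) - diffOp (bopC θ₂) (bopC θ₁ ζ))
          = fun ζ => optC bopC (Raiz.cat θ₁ θ₂) ζ - optC bopC (Raiz.cat θ₂ θ₁) ζ from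
        funext fun ζ => by rw [bop_key θ₁ θ₂ ζ, bop_key θ₂ θ₁ ζ],
      diffOp_sub, ← opt_diff bopC Bop Bop_eq, ← opt_diff bopC Bop Bop_eq]
  · rw [Bfrak_eq i, Bfrak_eq j, brak_diffOp,
      show (fun ζ => diffOp (bfC i) (bfC j ζ) - diffOp (bfC j) (bfC i ζ))
          = fun _ : Raiz n => (0 : Pol n) from
        funext fun ζ => by
          rw [bf_key i j ζ, bf_key j i ζ]
          exact sub_eq_zero.mpr (if_congr and_comm rfl rfl),
      diffOp_zeroC]
  · rw [Bop_eq θ, Bfrak_eq i, brak_diffOp]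
    by_cases hE : θ.1 = i
    · by_cases hB : Raiz.beg θ = i + 1
      · rw [if_neg (by rw [hTends, hTbeg]; exact fun hc => hc.2 hB),
          if_neg (by rw [hTends, hTbeg]; exact fun hc => hc.2 hE),
          show (fun ζ => diffOp (bopC θ) (bfC i ζ) - diffOp (bfC i) (bopC θ ζ))
              = fun _ : Raiz n => (0 : Pol n) from
            funext fun ζ => by
              rw [bopbf_t1 θ i ζ, bopbf_t2 θ i ζ]
              subst hE
              by_cases hz : Raiz.beg ζ = θ.1 + 1
              · rw [if_pos (show Raiz.beg ζ = θ.1 + 1 ∧ Raiz.beg ζ = θ.1 + 1 from ⟨hz, hz⟩),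
                  if_pos (show Raiz.beg ζ = θ.1 + 1 ∧ Raiz.beg θ = θ.1 + 1 from ⟨hz, hB⟩),
                  sub_self]
              · rw [if_neg (show ¬(Raiz.beg ζ = θ.1 + 1 ∧ Raiz.beg ζ = θ.1 + 1) from fun hc => hz hc.2),
                  if_neg (show ¬(Raiz.beg ζ = θ.1 + 1 ∧ Raiz.beg θ = θ.1 + 1) from fun hc => hz hc.1),
                  sub_self],
          diffOp_zeroC]
      · rw [if_pos (show θ.Ends i ∧ ¬ θ.Begins (i + 1) by rw [hTends, hTbeg]; exact ⟨hE, hB⟩),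
          show (fun ζ => diffOp (bopC θ) (bfC i ζ) - diffOp (bfC i) (bopC θ ζ)) = bopC θ from
            funext fun ζ => by
              rw [bopbf_t1 θ i ζ, bopbf_t2 θ i ζ,
                if_neg (show ¬(Raiz.beg ζ = θ.1 + 1 ∧ Raiz.beg θ = i + 1) from fun hc => hB hc.2),
                sub_zero]
              subst hE
              by_cases hz : Raiz.beg ζ = θ.1 + 1
              · rw [if_pos (show Raiz.beg ζ = θ.1 + 1 ∧ Raiz.beg ζ = θ.1 + 1 from ⟨hz, hz⟩),
                  bopC_pos hz]
              · rw [if_neg (show ¬(Raiz.beg ζ = θ.1 + 1 ∧ Raiz.beg ζ = θ.1 + 1) from fun hc => hz hc.2),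
                  bopC_neg hz]]
    · by_cases hB : Raiz.beg θ = i + 1
      · rw [if_neg (by rw [hTends, hTbeg]; exact fun hc => hE hc.1),
          if_pos (show θ.Begins (i + 1) ∧ ¬ θ.Ends i by rw [hTends, hTbeg]; exact ⟨hB, hE⟩),
          show (fun ζ => diffOp (bopC θ) (bfC i ζ) - diffOp (bfC i) (bopC θ ζ))
              = fun ζ => -(bopC θ ζ) from
            funext fun ζ => by
              rw [bopbf_t1 θ i ζ, bopbf_t2 θ i ζ,
                if_neg (show ¬(Raiz.beg ζ = i + 1 ∧ Raiz.beg ζ = θ.1 + 1) from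
                  fun hc => hE (add_right_cancel (hc.1.symm.trans hc.2)).symm),
                zero_sub]
              by_cases hz : Raiz.beg ζ = θ.1 + 1
              · rw [if_pos (show Raiz.beg ζ = θ.1 + 1 ∧ Raiz.beg θ = i + 1 from ⟨hz, hB⟩),
                  bopC_pos hz]
              · rw [if_neg (show ¬(Raiz.beg ζ = θ.1 + 1 ∧ Raiz.beg θ = i + 1) from fun hc => hz hc.1),
                  bopC_neg hz, neg_zero],
          diffOp_neg]
      · rw [if_neg (by rw [hTends, hTbeg]; exact fun hc => hE hc.1),
          if_neg (by rw [hTends, hTbeg]; exact fun hc => hB hc.1),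
          show (fun ζ => diffOp (bopC θ) (bfC i ζ) - diffOp (bfC i) (bopC θ ζ))
              = fun _ : Raiz n => (0 : Pol n) from
            funext fun ζ => by
              rw [bopbf_t1 θ i ζ, bopbf_t2 θ i ζ,
                if_neg (show ¬(Raiz.beg ζ = i + 1 ∧ Raiz.beg ζ = θ.1 + 1) from
                  fun hc => hE (add_right_cancel (hc.1.symm.trans hc.2)).symm),
                if_neg (show ¬(Raiz.beg ζ = θ.1 + 1 ∧ Raiz.beg θ = i + 1) from fun hc => hB hc.2),
                sub_self],
          diffOp_zeroC]
end

section
/- For all nonzero raiz θ, θ₁, θ₂ and all i ∈ ℤ/nℤ the following operator identities hold on N: [E(θ₁), B(θ₂)] = 0; [E(θ), 𝔅_i] = 0; [E(θ₁), x_{θ₂}·] = x_{θ₂⌣θ₁}·; [B(θ₁), x_{θ₂}·] = x_{θ₁⌣θ₂}·; and [𝔅_i, x_θ·] equals x_θ· if θ begins at i+1 and equals 0 otherwise (here x_ϑ· denotes multiplication by x_ϑ, and a term with undefined concatenation is 0). -/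
/-!
Common setup: raiz for the cyclic quiver `Ã_{n-1}`, the polynomial algebra
`N = ℚ[x_θ : θ ∈ R⁺(n)]`, and the locally finite differential operators
`E(θ)`, `Ẽ(θ)`, `B(θ)`, `𝔅_i`, `𝔈_i`, `Δ_i`, and the Chevalley operators
`e_i^T`, `h_i^T`, `f_i^T`, following Finkelberg–Kuznetsov.
-/

open MvPolynomial

/-!
Each of `E(θ)`, `B(θ)`, `𝔅_i` is the `ℚ`-derivation of `N` sending `x_ϑ` to its coefficient
at `∂/∂x_ϑ`. Commutators of derivations are derivations, so the first two identities only need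
to be checked on generators, where both sides are the same (triple) concatenation; and
`[D, x_ϑ·]` is multiplication by `D x_ϑ`, which gives the last three.
-/

namespace Raiz

variable {n : ℕ}

theorem beg_append {ϑ θ : Raiz n} (h : ϑ.1 = beg θ - 1) :
    beg ((θ.1, ϑ.2 + θ.2) : Raiz n) = beg ϑ := by
  simp only [beg, PNat.add_coe, Nat.cast_add] at h ⊢
  linear_combination -h

theorem ends_before_iff {ϑ θ : Raiz n} : ϑ.1 = beg θ - 1 ↔ beg θ = ϑ.1 + 1 := by
  rw [eq_sub_iff_add_eq, eq_comm]

end Raiz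

section diffOp

variable {n : ℕ}

theorem diffOp_eq_mkDerivation (c : Raiz n → Pol n) :
    diffOp c = mkDerivation ℚ c := by
  funext P
  let D : Derivation ℚ (Pol n) (Pol n) := ∑ η ∈ P.vars, c η • pderiv η
  have hD_apply (Q : Pol n) : D Q = ∑ η ∈ P.vars, c η * pderiv η Q := by
    rw [show ⇑D = ∑ η ∈ P.vars, ⇑(c η • pderiv η) from map_sum Derivation.coeFnAddMonoidHom _ _]
    simp
  have hD_X : ∀ ϑ ∈ (P.vars : Set (Raiz n)), D (X ϑ) = mkDerivation ℚ c (X ϑ) := by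
    intro ϑ hϑ
    simp [hD_apply, pderiv_X, Pi.single_apply, Finset.mem_coe.mp hϑ]
  calc diffOp c P = D P := (hD_apply P).symm
    _ = mkDerivation ℚ c P := derivation_eqOn_supported hD_X (mem_supported_vars P)

theorem diffOp_ite_X (c : Raiz n → Pol n) (p : Prop) [Decidable p] (η : Raiz n) :
    diffOp c (if p then X η else 0) = if p then c η else 0 := by
  split_ifs <;> simp [diffOp_eq_mkDerivation, mkDerivation_X]

theorem brak_diffOp_eq_zero {f g : Raiz n → Pol n}
    (h : ∀ ϑ, diffOp f (g ϑ) = diffOp g (f ϑ)) : brak (diffOp f) (diffOp g) = 0 := by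
  have hcomm : ⁅mkDerivation ℚ f, mkDerivation ℚ g⁆ = 0 := derivation_ext fun ϑ => by
    simpa [Derivation.commutator_apply, mkDerivation_X, sub_eq_zero, diffOp_eq_mkDerivation]
      using h ϑ
  funext P
  simpa [brak, diffOp_eq_mkDerivation, Derivation.commutator_apply] using congrArg (· P) hcomm

theorem brak_diffOp_mulX (c : Raiz n → Pol n) (ϑ : Raiz n) :
    brak (diffOp c) (mulX ϑ) = fun P => c ϑ * P := by
  funext P
  simp [brak, mulX, diffOp_eq_mkDerivation, mkDerivation_X, mul_comm]

end diffOp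

theorem opt_mulX_cat {n : ℕ} (ϑ θ : Raiz n) :
    opt mulX (Raiz.cat ϑ θ) =
      fun P => (if Raiz.beg θ = ϑ.1 + 1 then X ((θ.1, ϑ.2 + θ.2) : Raiz n) else 0) * P := by
  funext P
  unfold Raiz.cat
  split_ifs <;> simp [opt, mulX]

open Classical in
theorem comm_lemma_three_general {n : ℕ} (θ θ₁ θ₂ : Raiz n) (i : ZMod n) :
    brak (Eop θ₁) (Bop θ₂) = 0 ∧
    brak (Eop θ) (Bfrak i) = 0 ∧
    brak (Eop θ₁) (mulX θ₂) = opt mulX (Raiz.cat θ₂ θ₁) ∧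
    brak (Bop θ₁) (mulX θ₂) = opt mulX (Raiz.cat θ₁ θ₂) ∧
    brak (Bfrak i) (mulX θ) = (if θ.Begins (i + 1) then mulX θ else 0) := by
  refine ⟨brak_diffOp_eq_zero fun ϑ => ?_, brak_diffOp_eq_zero fun ϑ => ?_, ?_, ?_, ?_⟩
  · simp only [diffOp_ite_X]
    by_cases he : ϑ.1 = Raiz.beg θ₁ - 1
    · simp [he, Raiz.beg_append he, add_assoc]
    · simp [he]
  · simp only [diffOp_ite_X]
    by_cases he : ϑ.1 = Raiz.beg θ - 1
    · simp [he, Raiz.beg_append he]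
    · simp [he]
  · simp only [Eop, brak_diffOp_mulX, opt_mulX_cat, Raiz.ends_before_iff]
  · simp only [Bop, brak_diffOp_mulX, opt_mulX_cat]
  · funext P
    rw [Bfrak, brak_diffOp_mulX, Raiz.Begins]
    split_ifs <;> simp [mulX]

open Classical in
/-- For all nonzero raiz `θ, θ₁, θ₂` and all `i ∈ ℤ/nℤ`: `[E(θ₁), B(θ₂)] = 0`;
`[E(θ), 𝔅_i] = 0`; `[E(θ₁), x_{θ₂}·] = x_{θ₂⌣θ₁}·`; `[B(θ₁), x_{θ₂}·] = x_{θ₁⌣θ₂}·`;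
and `[𝔅_i, x_θ·]` equals `x_θ·` if `θ` begins at `i+1` and `0` otherwise
(a term with undefined concatenation being `0`). -/
theorem comm_lemma_three {n : ℕ} (hn : 2 ≤ n) (θ θ₁ θ₂ : Raiz n) (i : ZMod n) :
    brak (Eop θ₁) (Bop θ₂) = 0 ∧
    brak (Eop θ) (Bfrak i) = 0 ∧
    brak (Eop θ₁) (mulX θ₂) = opt mulX (Raiz.cat θ₂ θ₁) ∧
    brak (Bop θ₁) (mulX θ₂) = opt mulX (Raiz.cat θ₁ θ₂) ∧
    brak (Bfrak i) (mulX θ) = (if θ.Begins (i + 1) then mulX θ else 0) :=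
  comm_lemma_three_general θ θ₁ θ₂ i
end
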